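/- With α, θ, D_n as in the dense-singularity construction, define the slopes d_n(k/2ⁿ) := 2ⁿ(α((k+1)/2ⁿ) − α(k/2ⁿ)) for 0 ≤ k ≤ 2ⁿ − 1. Then for all n ≥ 2 and 0 ≤ k ≤ 2^{n−2} − 1: d_n(4k/2ⁿ) = (θ(n)/2) d_{n−1}((4k+2)/2ⁿ) + (1 − θ(n)/2) d_{n−1}(4k/2ⁿ); d_n((4k+1)/2ⁿ) = −(θ(n)/2) d_{n−1}((4k+2)/2ⁿ) + (1 + θ(n)/2) d_{n−1}(4k/2ⁿ); d_n((4k+2)/2ⁿ) = (1 + θ(n)/2) d_{n−1}((4k+2)/2ⁿ) − (θ(n)/2) d_{n−1}(4k/2ⁿ); d_n((4k+3)/2ⁿ) = (1 − θ(n)/2) d_{n−1}((4k+2)/2ⁿ) + (θ(n)/2) d_{n−1}(4k/2ⁿ). Consequently, max over x ∈ D_n∖{1} of |d_n(x)| ≤ (1 + θ(n)) · max over x ∈ D_{n−1}∖{1} of |d_{n−1}(x)|, and hence sup_n max_x |d_n(x)| ≤ 2 exp(∑_{l≥2} θ(l)). -/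
import Mathlib


/-- The slope `d_n(k/2ⁿ) = 2ⁿ(α((k+1)/2ⁿ) − α(k/2ⁿ))` of the piecewise-linear interpolant
of `a n · = α(·/2ⁿ)` on the interval `[k/2ⁿ, (k+1)/2ⁿ]`. -/
def dyadicSlope (a : ℕ → ℕ → ℝ) (n k : ℕ) : ℝ := 2 ^ n * (a n (k + 1) - a n k)

private lemma comb_abs (c1 c2 X Y S : ℝ) (hX : |X| ≤ S) (hY : |Y| ≤ S) (hS : 0 ≤ S) :
    |c1 * X + c2 * Y| ≤ (|c1| + |c2|) * S := by
  calc |c1 * X + c2 * Y| ≤ |c1 * X| + |c2 * Y| := abs_add_le _ _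
    _ = |c1| * |X| + |c2| * |Y| := by rw [abs_mul, abs_mul]
    _ ≤ |c1| * S + |c2| * S :=
        add_le_add (mul_le_mul_of_nonneg_left hX (abs_nonneg _))
          (mul_le_mul_of_nonneg_left hY (abs_nonneg _))
    _ = (|c1| + |c2|) * S := by ring

/-- **Slope recursion and uniform Lipschitz bound for the dense-singularity construction.**
With `a n k = α(k/2ⁿ)` defined by the `θ`-recursion, the slopes `d_n` satisfy the four
level-`n` identities in terms of `d_{n−1}` (note `d_{n−1}((4k+2)/2ⁿ) = dyadicSlope a (n−1) (2k+1)`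
and `d_{n−1}(4k/2ⁿ) = dyadicSlope a (n−1) (2k)`); consequently
`max_{x ∈ D_n∖{1}} |d_n(x)| ≤ (1 + θ(n)) max_{x ∈ D_{n−1}∖{1}} |d_{n−1}(x)|`, and hence
`|d_n(x)| ≤ 2·exp(∑_{l ≥ 2} θ(l))` for all `n` and all grid points. -/
theorem stmt18 (θ : ℕ → ℝ) (hθpos : ∀ n, 2 ≤ n → 0 < θ n)
    (hθsum : Summable fun l => θ (l + 2))
    (a : ℕ → ℕ → ℝ)
    (hbase0 : a 0 0 = 0) (hbase1 : a 0 1 = 0) (hhalf : a 1 1 = 1)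
    (hcons : ∀ n k, a (n + 1) (2 * k) = a n k)
    (hrec1 : ∀ m k, 1 ≤ k → k ≤ 2 ^ m →
      a (m + 2) (4 * k - 3) =
        θ (m + 2) / 4 * a (m + 2) (4 * k) + (1 - θ (m + 2)) / 2 * a (m + 2) (4 * k - 2) +
          (2 + θ (m + 2)) / 4 * a (m + 2) (4 * k - 4))
    (hrec2 : ∀ m k, 1 ≤ k → k ≤ 2 ^ m →
      a (m + 2) (4 * k - 1) =
        θ (m + 2) / 4 * a (m + 2) (4 * k - 4) + (1 - θ (m + 2)) / 2 * a (m + 2) (4 * k - 2) +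
          (2 + θ (m + 2)) / 4 * a (m + 2) (4 * k)) :
    (∀ m k : ℕ, k + 1 ≤ 2 ^ m →
      dyadicSlope a (m + 2) (4 * k) =
          θ (m + 2) / 2 * dyadicSlope a (m + 1) (2 * k + 1) +
            (1 - θ (m + 2) / 2) * dyadicSlope a (m + 1) (2 * k) ∧
      dyadicSlope a (m + 2) (4 * k + 1) =
          -(θ (m + 2) / 2) * dyadicSlope a (m + 1) (2 * k + 1) +
            (1 + θ (m + 2) / 2) * dyadicSlope a (m + 1) (2 * k) ∧
      dyadicSlope a (m + 2) (4 * k + 2) =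
          (1 + θ (m + 2) / 2) * dyadicSlope a (m + 1) (2 * k + 1) -
            θ (m + 2) / 2 * dyadicSlope a (m + 1) (2 * k) ∧
      dyadicSlope a (m + 2) (4 * k + 3) =
          (1 - θ (m + 2) / 2) * dyadicSlope a (m + 1) (2 * k + 1) +
            θ (m + 2) / 2 * dyadicSlope a (m + 1) (2 * k)) ∧
    (∀ m : ℕ, ∀ k < 2 ^ (m + 2),
      |dyadicSlope a (m + 2) k| ≤
        (1 + θ (m + 2)) * ⨆ j : Fin (2 ^ (m + 1)), |dyadicSlope a (m + 1) j|) ∧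
    (∀ n : ℕ, ∀ k < 2 ^ n,
      |dyadicSlope a n k| ≤ 2 * Real.exp (∑' l : ℕ, θ (l + 2))) := by
  have part1 : ∀ m k : ℕ, k + 1 ≤ 2 ^ m →
      dyadicSlope a (m + 2) (4 * k) =
          θ (m + 2) / 2 * dyadicSlope a (m + 1) (2 * k + 1) +
            (1 - θ (m + 2) / 2) * dyadicSlope a (m + 1) (2 * k) ∧
      dyadicSlope a (m + 2) (4 * k + 1) =
          -(θ (m + 2) / 2) * dyadicSlope a (m + 1) (2 * k + 1) +
            (1 + θ (m + 2) / 2) * dyadicSlope a (m + 1) (2 * k) ∧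
      dyadicSlope a (m + 2) (4 * k + 2) =
          (1 + θ (m + 2) / 2) * dyadicSlope a (m + 1) (2 * k + 1) -
            θ (m + 2) / 2 * dyadicSlope a (m + 1) (2 * k) ∧
      dyadicSlope a (m + 2) (4 * k + 3) =
          (1 - θ (m + 2) / 2) * dyadicSlope a (m + 1) (2 * k + 1) +
            θ (m + 2) / 2 * dyadicSlope a (m + 1) (2 * k) := by
    intro m k hk
    have h1 := hrec1 m (k + 1) (by omega) hk
    have h2 := hrec2 m (k + 1) (by omega) hk
    rw [show 4 * (k + 1) - 3 = 4 * k + 1 from by omega,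
        show 4 * (k + 1) - 2 = 4 * k + 2 from by omega,
        show 4 * (k + 1) - 4 = 4 * k from by omega,
        show 4 * (k + 1) = 4 * k + 4 from by omega] at h1
    rw [show 4 * (k + 1) - 1 = 4 * k + 3 from by omega,
        show 4 * (k + 1) - 2 = 4 * k + 2 from by omega,
        show 4 * (k + 1) - 4 = 4 * k from by omega,
        show 4 * (k + 1) = 4 * k + 4 from by omega] at h2
    have cA : a (m + 2) (4 * k) = a (m + 1) (2 * k) := by
      have h := hcons (m + 1) (2 * k); rwa [show 2 * (2 * k) = 4 * k from by ring] at h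
    have cB : a (m + 2) (4 * k + 2) = a (m + 1) (2 * k + 1) := by
      have h := hcons (m + 1) (2 * k + 1)
      rwa [show 2 * (2 * k + 1) = 4 * k + 2 from by ring] at h
    have cC : a (m + 2) (4 * k + 4) = a (m + 1) (2 * k + 2) := by
      have h := hcons (m + 1) (2 * k + 2)
      rwa [show 2 * (2 * k + 2) = 4 * k + 4 from by ring] at h
    rw [cA, cB, cC] at h1 h2
    refine ⟨?_, ?_, ?_, ?_⟩ <;>
      simp only [dyadicSlope, show 4 * k + 1 + 1 = 4 * k + 2 from by ring,
        show 4 * k + 2 + 1 = 4 * k + 3 from by ring,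
        show 4 * k + 3 + 1 = 4 * k + 4 from by ring,
        show 2 * k + 1 + 1 = 2 * k + 2 from by ring, h1, h2, cA, cB, cC,
        pow_succ] <;>
      ring
  have part2 : ∀ m : ℕ, ∀ k < 2 ^ (m + 2),
      |dyadicSlope a (m + 2) k| ≤
        (1 + θ (m + 2)) * ⨆ j : Fin (2 ^ (m + 1)), |dyadicSlope a (m + 1) j| := by
    intro m k hk
    set S := ⨆ j : Fin (2 ^ (m + 1)), |dyadicSlope a (m + 1) j| with hSdef
    have hbdd : BddAbove (Set.range fun j : Fin (2 ^ (m + 1)) => |dyadicSlope a (m + 1) j|) :=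
      Set.Finite.bddAbove (Set.finite_range _)
    have hle : ∀ j : ℕ, j < 2 ^ (m + 1) → |dyadicSlope a (m + 1) j| ≤ S := by
      intro j hj
      exact le_ciSup hbdd (⟨j, hj⟩ : Fin (2 ^ (m + 1)))
    have hS0 : 0 ≤ S := le_trans (abs_nonneg _) (hle 0 (by positivity))
    obtain ⟨q, hq4, hcase⟩ : ∃ q, q + 1 ≤ 2 ^ m ∧
        (k = 4 * q ∨ k = 4 * q + 1 ∨ k = 4 * q + 2 ∨ k = 4 * q + 3) := by
      refine ⟨k / 4, ?_, by omega⟩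
      have hpow : 2 ^ (m + 2) = 4 * 2 ^ m := by ring
      omega
    obtain ⟨H0, H1, H2, H3⟩ := part1 m q hq4
    have h2pow : 2 ^ (m + 1) = 2 * 2 ^ m := by ring
    have hx1 : |dyadicSlope a (m + 1) (2 * q + 1)| ≤ S := hle _ (by omega)
    have hx0 : |dyadicSlope a (m + 1) (2 * q)| ≤ S := hle _ (by omega)
    have ht : 0 < θ (m + 2) := hθpos _ (by omega)
    have habs1 : |1 - θ (m + 2) / 2| ≤ 1 + θ (m + 2) / 2 := by
      rcases abs_cases (1 - θ (m + 2) / 2) with ⟨h, _⟩ | ⟨h, _⟩ <;> linarith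
    rcases hcase with rfl | rfl | rfl | rfl
    · rw [H0]
      refine le_trans (comb_abs _ _ _ _ _ hx1 hx0 hS0) (mul_le_mul_of_nonneg_right ?_ hS0)
      rw [abs_of_pos (by linarith : (0:ℝ) < θ (m + 2) / 2)]
      linarith
    · rw [H1]
      refine le_trans (comb_abs _ _ _ _ _ hx1 hx0 hS0) (mul_le_mul_of_nonneg_right ?_ hS0)
      rw [abs_neg, abs_of_pos (by linarith : (0:ℝ) < θ (m + 2) / 2),
        abs_of_pos (by linarith : (0:ℝ) < 1 + θ (m + 2) / 2)]
      linarith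
    · rw [H2, sub_eq_add_neg, ← neg_mul]
      refine le_trans (comb_abs _ _ _ _ _ hx1 hx0 hS0) (mul_le_mul_of_nonneg_right ?_ hS0)
      rw [abs_neg, abs_of_pos (by linarith : (0:ℝ) < θ (m + 2) / 2),
        abs_of_pos (by linarith : (0:ℝ) < 1 + θ (m + 2) / 2)]
      linarith
    · rw [H3]
      refine le_trans (comb_abs _ _ _ _ _ hx1 hx0 hS0) (mul_le_mul_of_nonneg_right ?_ hS0)
      rw [abs_of_pos (by linarith : (0:ℝ) < θ (m + 2) / 2)]
      linarith
  have hθnn : ∀ l : ℕ, 0 ≤ θ (l + 2) := fun l => (hθpos _ (by omega)).le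
  have key : ∀ n : ℕ, ∀ k < 2 ^ (n + 1),
      |dyadicSlope a (n + 1) k| ≤ 2 * ∏ l ∈ Finset.range n, (1 + θ (l + 2)) := by
    intro n
    induction n with
    | zero =>
      intro k hk
      simp only [Finset.range_zero, Finset.prod_empty, mul_one]
      interval_cases k
      · have h10 : a 1 0 = 0 := by
          have h := hcons 0 0; simpa [hbase0] using h
        simp [dyadicSlope, h10, hhalf]
      · have h12 : a 1 2 = 0 := by
          have h := hcons 0 1; simpa [hbase1] using h
        simp [dyadicSlope, h12, hhalf]
    | succ n ih =>
      intro k hk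
      haveI : Nonempty (Fin (2 ^ (n + 1))) := ⟨⟨0, by positivity⟩⟩
      have hSle : (⨆ j : Fin (2 ^ (n + 1)), |dyadicSlope a (n + 1) j|) ≤
          2 * ∏ l ∈ Finset.range n, (1 + θ (l + 2)) :=
        ciSup_le fun j => ih j j.isLt
      have hfac : (0:ℝ) ≤ 1 + θ (n + 2) := by have := hθpos (n + 2) (by omega); linarith
      calc |dyadicSlope a (n + 2) k|
          ≤ (1 + θ (n + 2)) * ⨆ j : Fin (2 ^ (n + 1)), |dyadicSlope a (n + 1) j| :=
            part2 n k hk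
        _ ≤ (1 + θ (n + 2)) * (2 * ∏ l ∈ Finset.range n, (1 + θ (l + 2))) :=
            mul_le_mul_of_nonneg_left hSle hfac
        _ = 2 * ∏ l ∈ Finset.range (n + 1), (1 + θ (l + 2)) := by
            rw [Finset.prod_range_succ]; ring
  have prodle : ∀ n : ℕ,
      (∏ l ∈ Finset.range n, (1 + θ (l + 2))) ≤ Real.exp (∑' l : ℕ, θ (l + 2)) := by
    intro n
    calc ∏ l ∈ Finset.range n, (1 + θ (l + 2))
        ≤ ∏ l ∈ Finset.range n, Real.exp (θ (l + 2)) :=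
          Finset.prod_le_prod (fun i _ => by have := hθnn i; linarith)
            (fun i _ => by have := Real.add_one_le_exp (θ (i + 2)); linarith)
      _ = Real.exp (∑ l ∈ Finset.range n, θ (l + 2)) := by
          rw [← Real.exp_sum]
      _ ≤ Real.exp (∑' l : ℕ, θ (l + 2)) := by
          apply Real.exp_le_exp.mpr
          exact Summable.sum_le_tsum (Finset.range n) (fun i _ => hθnn i) hθsum
  refine ⟨part1, part2, ?_⟩
  intro n k hk
  match n with
  | 0 =>
    interval_cases k
    have h00 : dyadicSlope a 0 0 = 0 := by simp [dyadicSlope, hbase0, hbase1]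
    rw [h00, abs_zero]
    positivity
  | (n + 1) =>
    calc |dyadicSlope a (n + 1) k| ≤ 2 * ∏ l ∈ Finset.range n, (1 + θ (l + 2)) := key n k hk
      _ ≤ 2 * Real.exp (∑' l : ℕ, θ (l + 2)) := by
          have := prodle n; linarith
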